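/- arXiv:1510.02628 — 2 statements merged into one kernel-verified Lean document; each statement's English description precedes it below -/
import Mathlib

section
/- Let n ≥ 3 and let 𝒫_n be the ℚ-algebra presented by generators Y_{ij}^k for all triples of distinct i,j,k ∈ [n], subject to: (i) the triangle relations Y_{ij}^k Y_{ji}^k = 1 and Y_{ij}^k Y_{jk}^i Y_{ki}^j = 1 for all distinct i,j,k ∈ [n], and Y_{ij}^ℓ Y_{jk}^ℓ Y_{ki}^ℓ = 1 for all distinct i,j,k,ℓ ∈ [n]; (ii) the exchange relations Y_{iℓ}^j = Y_{ij}^k Y_{jℓ}^i + Y_{iℓ}^k for all cyclic quadruples (i,j,k,ℓ) in [n]. Then the ℚ-algebra homomorphism 𝒫_n → 𝒜_n determined by Y_{ij}^k ↦ x_{ki}⁻¹x_{kj} is injective and its image is 𝒬_n; in particular 𝒫_n is isomorphic to 𝒬_n. -/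
open scoped Classical

noncomputable section

namespace NCPolygon

/-- Cyclic successor on `Fin n` (the vertices of the `n`-gon in cyclic order). -/
def csucc {n : ℕ} (i : Fin n) : Fin n :=
  ⟨(i.1 + 1) % n, Nat.mod_lt _ (Nat.lt_of_le_of_lt (Nat.zero_le _) i.isLt)⟩

/-- Cyclic predecessor on `Fin n`. -/
def cpred {n : ℕ} (i : Fin n) : Fin n :=
  ⟨(i.1 + (n - 1)) % n, Nat.mod_lt _ (Nat.lt_of_le_of_lt (Nat.zero_le _) i.isLt)⟩

/-- A list of elements of `Fin n` is *cyclic* if its entries are distinct and some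
cyclic rotation of it is strictly increasing. -/
def IsCyclicSeq {n : ℕ} (l : List (Fin n)) : Prop :=
  l.Nodup ∧ ∃ k : ℕ, (l.rotate k).Pairwise (· < ·)

/-- The pair `(i,k)` crosses `(j,l)` iff `(i,j,k,l)` is cyclic. -/
def Crosses {n : ℕ} (p q : Fin n × Fin n) : Prop :=
  IsCyclicSeq [p.1, q.1, p.2, q.2]

def NonCrossing {n : ℕ} (Δ : Set (Fin n × Fin n)) : Prop :=
  (∀ p ∈ Δ, p.1 ≠ p.2) ∧ ∀ p ∈ Δ, ∀ q ∈ Δ, ¬ Crosses p q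

/-- A triangulation of the `n`-gon: a maximal crossing-free set of (directed) chords. -/
def IsTriangulation {n : ℕ} (Δ : Set (Fin n × Fin n)) : Prop :=
  NonCrossing Δ ∧ ∀ Δ' : Set (Fin n × Fin n), NonCrossing Δ' → Δ ⊆ Δ' → Δ' = Δ

/-! ### The noncommutative polygon algebra `𝒜_n` -/

abbrev OffD (n : ℕ) := {p : Fin n × Fin n // p.1 ≠ p.2}

abbrev AGen (n : ℕ) := OffD n ⊕ OffD n

def xF {n : ℕ} (i j : Fin n) : FreeAlgebra ℚ (AGen n) :=
  if h : i ≠ j then FreeAlgebra.ι ℚ (Sum.inl ⟨(i, j), h⟩) else 1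

def xiF {n : ℕ} (i j : Fin n) : FreeAlgebra ℚ (AGen n) :=
  if h : i ≠ j then FreeAlgebra.ι ℚ (Sum.inr ⟨(i, j), h⟩) else 1

/-- The defining relations of `𝒜_n`: invertibility, triangle, and exchange relations. -/
inductive ARel (n : ℕ) : FreeAlgebra ℚ (AGen n) → FreeAlgebra ℚ (AGen n) → Prop
  | mul_inv {i j : Fin n} (h : i ≠ j) : ARel n (xF i j * xiF i j) 1
  | inv_mul {i j : Fin n} (h : i ≠ j) : ARel n (xiF i j * xF i j) 1
  | triangle {i j k : Fin n} (hij : i ≠ j) (hik : i ≠ k) (hjk : j ≠ k) :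
      ARel n (xF i j * xiF k j * xF k i) (xF i k * xiF j k * xF j i)
  | exchange {i j k l : Fin n} (h : IsCyclicSeq [i, j, k, l]) :
      ARel n (xF j l) (xF j k * xiF i k * xF i l + xF j i * xiF k i * xF k l)

/-- The noncommutative `n`-gon algebra `𝒜_n`. -/
abbrev NCPoly (n : ℕ) := RingQuot (ARel n)

/-- The generator `x_{ij} ∈ 𝒜_n` (junk value `1` when `i = j`). -/
def X {n : ℕ} (i j : Fin n) : NCPoly n :=
  RingQuot.mkAlgHom ℚ (ARel n) (xF i j)

/-- The generator `x_{ij}⁻¹ ∈ 𝒜_n`. -/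
def Xinv {n : ℕ} (i j : Fin n) : NCPoly n :=
  RingQuot.mkAlgHom ℚ (ARel n) (xiF i j)

/-- The noncommutative angle `T_i^{jk} = x_{ji}⁻¹ x_{jk} x_{ik}⁻¹ ∈ 𝒜_n`. -/
def Tang {n : ℕ} (i j k : Fin n) : NCPoly n := Xinv j i * X j k * Xinv i k

/-! ### Triangle groups -/

def tF {n : ℕ} (Δ : Set (Fin n × Fin n)) (i j : Fin n) : FreeGroup Δ :=
  if h : (i, j) ∈ Δ then FreeGroup.of (⟨(i, j), h⟩ : Δ) else 1

/-- The triangle relations of the triangle group `𝕋_Δ`. -/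
def triRels {n : ℕ} (Δ : Set (Fin n × Fin n)) : Set (FreeGroup Δ) :=
  { w | ∃ i j k : Fin n, i ≠ j ∧ i ≠ k ∧ j ≠ k ∧
      (i, j) ∈ Δ ∧ (j, i) ∈ Δ ∧ (i, k) ∈ Δ ∧ (k, i) ∈ Δ ∧ (j, k) ∈ Δ ∧ (k, j) ∈ Δ ∧
      w = tF Δ i j * (tF Δ k j)⁻¹ * tF Δ k i *
        (tF Δ i k * (tF Δ j k)⁻¹ * tF Δ j i)⁻¹ }

/-- The triangle group `𝕋_Δ` of a triangulation `Δ`. -/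
abbrev TriGroup {n : ℕ} (Δ : Set (Fin n × Fin n)) := PresentedGroup (triRels Δ)

/-- The generator `t_{ij} ∈ 𝕋_Δ` (junk value `1` when `(i,j) ∉ Δ`). -/
def tG {n : ℕ} (Δ : Set (Fin n × Fin n)) (i j : Fin n) : TriGroup Δ :=
  if h : (i, j) ∈ Δ then PresentedGroup.of (rels := triRels Δ) ⟨(i, j), h⟩ else 1

/-! ### The big triangle group `𝕋_n` -/

def btF {n : ℕ} (i j : Fin n) : FreeGroup (OffD n) :=
  if h : i ≠ j then FreeGroup.of (⟨(i, j), h⟩ : OffD n) else 1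

def bigRels (n : ℕ) : Set (FreeGroup (OffD n)) :=
  { w | ∃ i j k : Fin n, i ≠ j ∧ i ≠ k ∧ j ≠ k ∧
      w = btF i j * (btF k j)⁻¹ * btF k i * (btF i k * (btF j k)⁻¹ * btF j i)⁻¹ }

/-- The big triangle group `𝕋_n`. -/
abbrev BigTriGroup (n : ℕ) := PresentedGroup (bigRels n)

/-- The generator `t_{ij} ∈ 𝕋_n`. -/
def bigT {n : ℕ} (i j : Fin n) : BigTriGroup n :=
  if h : i ≠ j then PresentedGroup.of (rels := bigRels n) ⟨(i, j), h⟩ else 1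

/-! ### Distinguished subalgebras and subgroups -/

/-- `𝒜_Δ`: the subalgebra of `𝒜_n` generated by all `x_{ij}` together with the
`x_{ij}⁻¹` for `(i,j) ∈ Δ`. -/
def ADelta (n : ℕ) (Δ : Set (Fin n × Fin n)) : Subalgebra ℚ (NCPoly n) :=
  Algebra.adjoin ℚ
    ({a | ∃ i j : Fin n, i ≠ j ∧ a = X i j} ∪ {a | ∃ p ∈ Δ, a = Xinv p.1 p.2})

/-- `𝒬_n`: the subalgebra of `𝒜_n` generated by the `y_{ij}^k = x_{ki}⁻¹ x_{kj}`. -/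
def Qn (n : ℕ) : Subalgebra ℚ (NCPoly n) :=
  Algebra.adjoin ℚ
    {a : NCPoly n | ∃ i j k : Fin n, i ≠ j ∧ i ≠ k ∧ j ≠ k ∧ a = Xinv k i * X k j}

/-- `𝕌_Δ`: the subgroup of `𝕋_Δ` generated by the `u_{ij}^k = t_{ki}⁻¹ t_{kj}`. -/
def UDelta {n : ℕ} (Δ : Set (Fin n × Fin n)) : Subgroup (TriGroup Δ) :=
  Subgroup.closure
    {g | ∃ i j k : Fin n, (k, i) ∈ Δ ∧ (k, j) ∈ Δ ∧ g = (tG Δ k i)⁻¹ * tG Δ k j}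


/-- Triples of pairwise distinct indices. -/
abbrev Tri (n : ℕ) := {t : Fin n × Fin n × Fin n // t.1 ≠ t.2.1 ∧ t.1 ≠ t.2.2 ∧ t.2.1 ≠ t.2.2}

/-- The free generator `Y_{ij}^k` (junk value `1` for non-distinct indices). -/
def yF {n : ℕ} (i j k : Fin n) : FreeAlgebra ℚ (Tri n) :=
  if h : i ≠ j ∧ i ≠ k ∧ j ≠ k then FreeAlgebra.ι ℚ ⟨(i, j, k), h⟩ else 1

/-- The defining relations of the presented algebra `𝒫_n`. -/
inductive QRel (n : ℕ) : FreeAlgebra ℚ (Tri n) → FreeAlgebra ℚ (Tri n) → Prop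
  | invol {i j k : Fin n} (h : i ≠ j ∧ i ≠ k ∧ j ≠ k) : QRel n (yF i j k * yF j i k) 1
  | tri3 {i j k : Fin n} (h : i ≠ j ∧ i ≠ k ∧ j ≠ k) :
      QRel n (yF i j k * yF j k i * yF k i j) 1
  | tri4 {i j k l : Fin n} (h : [i, j, k, l].Nodup) :
      QRel n (yF i j l * yF j k l * yF k i l) 1
  | exch {i j k l : Fin n} (h : IsCyclicSeq [i, j, k, l]) :
      QRel n (yF i l j) (yF i j k * yF j l i + yF i l k)

/-!
The elements `x_{ki}⁻¹ x_{kj}` of `𝒜_n` satisfy the relations of `𝒫_n`, so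
`Y_{ij}^k ↦ x_{ki}⁻¹ x_{kj}` is well defined, and its range is `𝒬_n` by construction.
Injectivity comes from fixing a gauge: choose for every vertex `i` another vertex `σ i`
(its cyclic successor, say) and normalise `x_{i,σ i}` to `1`. Concretely, `x_{ij} ↦ Y_{σ i,j}^i`
and `x_{ij}⁻¹ ↦ Y_{j,σ i}^i` respect the relations of `𝒜_n`, and the resulting algebra map
`𝒜_n → 𝒫_n` is a left inverse of `𝒫_n → 𝒜_n` because `Y_{i,σ k}^k Y_{σ k,j}^k = Y_{ij}^k`.
-/

lemma ne_of_nodup_four {α : Type*} {i j k l : α} (h : [i, j, k, l].Nodup) :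
    i ≠ j ∧ i ≠ k ∧ i ≠ l ∧ j ≠ k ∧ j ≠ l ∧ k ≠ l := by
  simp only [List.nodup_cons, List.mem_cons, List.not_mem_nil,
    or_false, not_or, List.nodup_nil, and_true] at h
  tauto

section Presented

variable {n : ℕ}

def Y (i j k : Fin n) : RingQuot (QRel n) :=
  RingQuot.mkAlgHom ℚ (QRel n) (yF i j k)

lemma Y_eq_one_of_not_distinct {i j k : Fin n} (h : ¬(i ≠ j ∧ i ≠ k ∧ j ≠ k)) :
    Y i j k = 1 := by
  rw [Y, yF, dif_neg h, map_one]

lemma Y_self (i k : Fin n) : Y i i k = 1 := Y_eq_one_of_not_distinct (by simp)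

lemma Y_mul_Y_swap {i j k : Fin n} (h : i ≠ j ∧ i ≠ k ∧ j ≠ k) :
    Y i j k * Y j i k = 1 := by
  simpa [Y] using RingQuot.mkAlgHom_rel ℚ (QRel.invol h)

lemma Y_mul_Y_mul_Y_rotate {i j k : Fin n} (h : i ≠ j ∧ i ≠ k ∧ j ≠ k) :
    Y i j k * Y j k i * Y k i j = 1 := by
  simpa [Y] using RingQuot.mkAlgHom_rel ℚ (QRel.tri3 h)

lemma Y_mul_Y_mul_Y_cycle {i j k l : Fin n} (h : [i, j, k, l].Nodup) :
    Y i j l * Y j k l * Y k i l = 1 := by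
  simpa [Y] using RingQuot.mkAlgHom_rel ℚ (QRel.tri4 h)

lemma Y_exchange {i j k l : Fin n} (h : IsCyclicSeq [i, j, k, l]) :
    Y i l j = Y i j k * Y j l i + Y i l k := by
  simpa [Y] using RingQuot.mkAlgHom_rel ℚ (QRel.exch h)

lemma Y_mul_Y {x z y w : Fin n} (hx : w ≠ x) (hz : w ≠ z) (hy : w ≠ y) :
    Y x z w * Y z y w = Y x y w := by
  by_cases hxz : x = z
  · rw [hxz, Y_self, one_mul]
  by_cases hzy : z = y
  · rw [hzy, Y_self, mul_one]
  by_cases hxy : x = y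
  · rw [hxy, Y_self]
    exact Y_mul_Y_swap ⟨hxy ▸ hxz, hy.symm, hz.symm⟩
  have hcycle : Y x z w * Y z y w * Y y x w = 1 :=
    Y_mul_Y_mul_Y_cycle (by simp [*, Ne.symm hx, Ne.symm hz, Ne.symm hy])
  calc Y x z w * Y z y w = Y x z w * Y z y w * (Y y x w * Y x y w) := by
        rw [Y_mul_Y_swap ⟨Ne.symm hxy, hy.symm, hx.symm⟩, mul_one]
    _ = Y x y w := by rw [← mul_assoc, hcycle, one_mul]

lemma Y_split {x y z : Fin n} (hxy : x ≠ y) (hxz : x ≠ z) (hyz : y ≠ z) :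
    Y x y z = Y x z y * Y z y x := by
  have hinv : Y y z x * Y z x y * (Y x z y * Y z y x) = 1 := by
    rw [mul_assoc, ← mul_assoc (Y z x y), Y_mul_Y_swap ⟨hxz.symm, hyz.symm, hxy⟩, one_mul,
      Y_mul_Y_swap ⟨hyz, hxy.symm, hxz.symm⟩]
  calc Y x y z = Y x y z * (Y y z x * Y z x y * (Y x z y * Y z y x)) := by rw [hinv, mul_one]
    _ = Y x y z * Y y z x * Y z x y * (Y x z y * Y z y x) := by simp only [mul_assoc]
    _ = Y x z y * Y z y x := by rw [Y_mul_Y_mul_Y_rotate ⟨hxy, hxz, hyz⟩, one_mul]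

lemma algHom_ext_of_Y {B : Type*} [Semiring B] [Algebra ℚ B]
    {g h : RingQuot (QRel n) →ₐ[ℚ] B}
    (H : ∀ i j k : Fin n, i ≠ j → i ≠ k → j ≠ k → g (Y i j k) = h (Y i j k)) : g = h := by
  refine RingQuot.ringQuot_ext' _ _ _ (FreeAlgebra.hom_ext (funext fun t => ?_))
  obtain ⟨⟨i, j, k⟩, hij, hik, hjk⟩ := t
  have hY : Y i j k =
      RingQuot.mkAlgHom ℚ (QRel n) (FreeAlgebra.ι ℚ ⟨(i, j, k), hij, hik, hjk⟩) := by
    rw [Y, yF, dif_pos ⟨hij, hik, hjk⟩]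
  simpa [hY] using H i j k hij hik hjk

end Presented

section Polygon

variable {n : ℕ} {i j k l : Fin n}

lemma X_mul_Xinv (h : i ≠ j) : X i j * Xinv i j = 1 := by
  simpa [X, Xinv] using RingQuot.mkAlgHom_rel ℚ (ARel.mul_inv (n := n) h)

lemma Xinv_mul_X (h : i ≠ j) : Xinv i j * X i j = 1 := by
  simpa [X, Xinv] using RingQuot.mkAlgHom_rel ℚ (ARel.inv_mul (n := n) h)

lemma X_triangle (hij : i ≠ j) (hik : i ≠ k) (hjk : j ≠ k) :
    X i j * Xinv k j * X k i = X i k * Xinv j k * X j i := by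
  simpa [X, Xinv] using RingQuot.mkAlgHom_rel ℚ (ARel.triangle (n := n) hij hik hjk)

lemma X_exchange (h : IsCyclicSeq [i, j, k, l]) :
    X j l = X j k * Xinv i k * X i l + X j i * Xinv k i * X k l := by
  simpa [X, Xinv] using RingQuot.mkAlgHom_rel ℚ (ARel.exchange (n := n) h)

def unitX (h : i ≠ j) : (NCPoly n)ˣ := ⟨X i j, Xinv i j, X_mul_Xinv h, Xinv_mul_X h⟩

@[simp] lemma val_unitX (h : i ≠ j) : (unitX h : NCPoly n) = X i j := rfl

@[simp] lemma val_inv_unitX (h : i ≠ j) : ((unitX h)⁻¹ : (NCPoly n)ˣ) = Xinv i j := rfl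

lemma Tang_symm (hij : i ≠ j) (hik : i ≠ k) (hjk : j ≠ k) : Tang i k j = Tang i j k := by
  have htri : unitX hij * (unitX hjk.symm)⁻¹ * unitX hik.symm
      = unitX hik * (unitX hjk)⁻¹ * unitX hij.symm :=
    Units.ext (by simpa using X_triangle hij hik hjk)
  simpa [Tang, mul_assoc] using congrArg (fun u => ((u⁻¹ : (NCPoly n)ˣ) : NCPoly n)) htri

def y (i j k : Fin n) : NCPoly n := Xinv k i * X k j

lemma y_mul_y (hj : k ≠ j) (i l : Fin n) : y i j k * y j l k = y i l k := by
  rw [y, y, y, mul_assoc, ← mul_assoc (X k j), X_mul_Xinv hj, one_mul]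

lemma y_self (hi : k ≠ i) : y i i k = 1 := Xinv_mul_X hi

lemma y_mul_y_rotate (hij : i ≠ j) (hik : i ≠ k) (hjk : j ≠ k) :
    y i j k * y j k i = y i k j := by
  calc y i j k * y j k i = Tang i k j * X i k := by simp only [y, Tang, mul_assoc]
    _ = Tang i j k * X i k := by rw [Tang_symm hij hik hjk]
    _ = y i k j := by rw [Tang, mul_assoc, Xinv_mul_X hik, mul_one, y]

lemma y_exchange (h : IsCyclicSeq [i, j, k, l]) : y i l j = y i j k * y j l i + y i l k := by
  obtain ⟨hij, hik, -, hjk, -, -⟩ := ne_of_nodup_four h.1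
  calc y i l j = Tang i j k * X i l + Xinv j i * X j i * y i l k := by
        simp only [y, Tang, X_exchange h, mul_add, mul_assoc]
    _ = y i j k * y j l i + y i l k := by
        rw [Xinv_mul_X hij.symm, one_mul, ← Tang_symm hij hik hjk]
        simp only [y, Tang, mul_assoc]

end Polygon

section Map

variable {n : ℕ}

def presentationMapFree : FreeAlgebra ℚ (Tri n) →ₐ[ℚ] NCPoly n :=
  FreeAlgebra.lift ℚ fun t => y t.1.1 t.1.2.1 t.1.2.2

lemma presentationMapFree_yF {i j k : Fin n} (h : i ≠ j ∧ i ≠ k ∧ j ≠ k) :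
    presentationMapFree (yF i j k) = y i j k := by
  rw [presentationMapFree, yF, dif_pos h, FreeAlgebra.lift_ι_apply]

lemma presentationMapFree_rel ⦃a b : FreeAlgebra ℚ (Tri n)⦄ (r : QRel n a b) :
    presentationMapFree a = presentationMapFree b := by
  induction r with
  | @invol i j k h =>
    simp only [map_mul, map_one, presentationMapFree_yF h,
      presentationMapFree_yF ⟨h.1.symm, h.2.2, h.2.1⟩, y_mul_y h.2.2.symm, y_self h.2.1.symm]
  | @tri3 i j k h =>
    obtain ⟨hij, hik, hjk⟩ := h
    rw [map_mul, map_mul, map_one, presentationMapFree_yF ⟨hij, hik, hjk⟩,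
      presentationMapFree_yF ⟨hjk, hij.symm, hik.symm⟩,
      presentationMapFree_yF ⟨hik.symm, hjk.symm, hij⟩, y_mul_y_rotate hij hik hjk,
      y_mul_y hjk, y_self hij.symm]
  | @tri4 i j k l h =>
    obtain ⟨hij, hik, hil, hjk, hjl, hkl⟩ := ne_of_nodup_four h
    rw [map_mul, map_mul, map_one, presentationMapFree_yF ⟨hij, hil, hjl⟩,
      presentationMapFree_yF ⟨hjk, hjl, hkl⟩, presentationMapFree_yF ⟨hik.symm, hkl, hil⟩,
      y_mul_y hjl.symm, y_mul_y hkl.symm, y_self hil.symm]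
  | @exch i j k l h =>
    obtain ⟨hij, hik, hil, hjk, hjl, hkl⟩ := ne_of_nodup_four h.1
    rw [map_add, map_mul, presentationMapFree_yF ⟨hil, hij, hjl.symm⟩,
      presentationMapFree_yF ⟨hij, hik, hjk⟩, presentationMapFree_yF ⟨hjl, hij.symm, hil.symm⟩,
      presentationMapFree_yF ⟨hil, hik, hkl.symm⟩]
    exact y_exchange h

def presentationMap : RingQuot (QRel n) →ₐ[ℚ] NCPoly n :=
  RingQuot.liftAlgHom ℚ ⟨presentationMapFree, presentationMapFree_rel⟩

lemma presentationMap_Y {i j k : Fin n} (hij : i ≠ j) (hik : i ≠ k) (hjk : j ≠ k) :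
    presentationMap (Y i j k) = y i j k := by
  rw [presentationMap, Y, RingQuot.liftAlgHom_mkAlgHom_apply,
    presentationMapFree_yF ⟨hij, hik, hjk⟩]

lemma range_presentationMap : (presentationMap (n := n)).range = Qn n := by
  have hcomp : presentationMap.comp (RingQuot.mkAlgHom ℚ (QRel n)) = presentationMapFree := by
    ext t
    simp [presentationMap]
  rw [← Algebra.map_top, ← (AlgHom.range_eq_top _).mpr (RingQuot.mkAlgHom_surjective ℚ _),
    ← AlgHom.range_comp, hcomp, presentationMapFree,
    ← Algebra.adjoin_range_eq_range_freeAlgebra_lift, Qn]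
  congr 1
  ext a
  constructor
  · rintro ⟨⟨⟨i, j, k⟩, hij, hik, hjk⟩, rfl⟩
    exact ⟨i, j, k, hij, hik, hjk, rfl⟩
  · rintro ⟨i, j, k, hij, hik, hjk, rfl⟩
    exact ⟨⟨(i, j, k), hij, hik, hjk⟩, rfl⟩

end Map

section GaugeFixing

variable {n : ℕ}

lemma Y_gauge_triangle {a i j k : Fin n} (hai : a ≠ i) (hij : i ≠ j) (hik : i ≠ k)
    (hjk : j ≠ k) :
    Y a j i * Y j i k = Y a k i * Y k i j := by
  rw [Y_split hij.symm hjk hik, ← mul_assoc, Y_mul_Y hai.symm hij hik]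

lemma Y_gauge_exchange {a i j k l : Fin n} (h : IsCyclicSeq [i, j, k, l]) (haj : a ≠ j) :
    Y a l j = Y a k j * Y k l i + Y a i j * Y i l k := by
  obtain ⟨hij, hik, hil, hjk, hjl, -⟩ := ne_of_nodup_four h.1
  calc Y a l j = Y a i j * Y i l j := (Y_mul_Y haj.symm hij.symm hjl).symm
    _ = Y a i j * (Y i k j * Y k j i * Y j l i + Y i l k) := by
        rw [Y_exchange h, Y_split hij hik hjk]
    _ = Y a k j * Y k l i + Y a i j * Y i l k := by
        rw [mul_add, mul_assoc (Y i k j), ← mul_assoc (Y a i j), Y_mul_Y haj.symm hij.symm hjk,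
          Y_mul_Y hik hij hil]

variable (σ : Fin n → Fin n) (hσ : ∀ i, σ i ≠ i)

def gaugeFixFree : FreeAlgebra ℚ (AGen n) →ₐ[ℚ] RingQuot (QRel n) :=
  FreeAlgebra.lift ℚ <|
    Sum.elim (fun p => Y (σ p.1.1) p.1.2 p.1.1) (fun p => Y p.1.2 (σ p.1.1) p.1.1)

lemma gaugeFixFree_xF (i j : Fin n) : gaugeFixFree σ (xF i j) = Y (σ i) j i := by
  by_cases h : i = j
  · rw [xF, dif_neg (not_not.mpr h), map_one, Y_eq_one_of_not_distinct (by simp [h])]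
  · rw [gaugeFixFree, xF, dif_pos h, FreeAlgebra.lift_ι_apply, Sum.elim_inl]

lemma gaugeFixFree_xiF (i j : Fin n) : gaugeFixFree σ (xiF i j) = Y j (σ i) i := by
  by_cases h : i = j
  · rw [xiF, dif_neg (not_not.mpr h), map_one, Y_eq_one_of_not_distinct (by simp [h])]
  · rw [gaugeFixFree, xiF, dif_pos h, FreeAlgebra.lift_ι_apply, Sum.elim_inr]

include hσ in
lemma gaugeFixFree_rel ⦃a b : FreeAlgebra ℚ (AGen n)⦄ (r : ARel n a b) :
    gaugeFixFree σ a = gaugeFixFree σ b := by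
  induction r with
  | @mul_inv i j h =>
    rw [map_mul, map_one, gaugeFixFree_xF, gaugeFixFree_xiF,
      Y_mul_Y (hσ i).symm h (hσ i).symm, Y_self]
  | @inv_mul i j h =>
    rw [map_mul, map_one, gaugeFixFree_xF, gaugeFixFree_xiF, Y_mul_Y h (hσ i).symm h, Y_self]
  | @triangle i j k hij hik hjk =>
    simp only [map_mul, gaugeFixFree_xF, gaugeFixFree_xiF]
    rw [mul_assoc, Y_mul_Y hjk.symm (hσ k).symm hik.symm, mul_assoc,
      Y_mul_Y hjk (hσ j).symm hij.symm, Y_gauge_triangle (hσ i) hij hik hjk]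
  | @exchange i j k l h =>
    obtain ⟨-, hik, hil, -, -, hkl⟩ := ne_of_nodup_four h.1
    simp only [map_add, map_mul, gaugeFixFree_xF, gaugeFixFree_xiF]
    rw [mul_assoc, Y_mul_Y hik (hσ i).symm hil, mul_assoc, Y_mul_Y hik.symm (hσ k).symm hkl]
    exact Y_gauge_exchange h (hσ j)

def gaugeFix : NCPoly n →ₐ[ℚ] RingQuot (QRel n) :=
  RingQuot.liftAlgHom ℚ ⟨gaugeFixFree σ, gaugeFixFree_rel σ hσ⟩

lemma gaugeFix_X (i j : Fin n) : gaugeFix σ hσ (X i j) = Y (σ i) j i := by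
  rw [gaugeFix, X, RingQuot.liftAlgHom_mkAlgHom_apply, gaugeFixFree_xF]

lemma gaugeFix_Xinv (i j : Fin n) : gaugeFix σ hσ (Xinv i j) = Y j (σ i) i := by
  rw [gaugeFix, Xinv, RingQuot.liftAlgHom_mkAlgHom_apply, gaugeFixFree_xiF]

lemma gaugeFix_comp_presentationMap : (gaugeFix σ hσ).comp presentationMap = AlgHom.id ℚ _ :=
  algHom_ext_of_Y fun i j k hij hik hjk => by
    rw [AlgHom.comp_apply, presentationMap_Y hij hik hjk, y, map_mul, gaugeFix_X, gaugeFix_Xinv,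
      Y_mul_Y hik.symm (hσ k).symm hjk.symm, AlgHom.id_apply]

lemma leftInverse_gaugeFix : Function.LeftInverse (gaugeFix σ hσ) presentationMap :=
  AlgHom.congr_fun (gaugeFix_comp_presentationMap σ hσ)

end GaugeFixing

lemma csucc_ne_self {n : ℕ} (hn : 2 ≤ n) (i : Fin n) : csucc i ≠ i := by
  intro h
  have hval : (i.1 + 1) % n = i.1 := congrArg Fin.val h
  rcases Nat.lt_or_ge (i.1 + 1) n with hlt | hge
  · rw [Nat.mod_eq_of_lt hlt] at hval
    omega
  · rw [show i.1 + 1 = n by omega, Nat.mod_self] at hval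
    omega

lemma presentationMap_injective {n : ℕ} (hn : 2 ≤ n) :
    Function.Injective (presentationMap (n := n)) :=
  (leftInverse_gaugeFix csucc (csucc_ne_self hn)).injective

/-- The algebra homomorphism `𝒫_n → 𝒜_n` determined by
`Y_{ij}^k ↦ x_{ki}⁻¹ x_{kj}` is injective with image `𝒬_n`. -/
theorem presented_Qn (n : ℕ) (hn : 3 ≤ n) :
    ∃ f : RingQuot (QRel n) →ₐ[ℚ] NCPoly n,
      (∀ i j k : Fin n, i ≠ j → i ≠ k → j ≠ k →
        f (RingQuot.mkAlgHom ℚ (QRel n) (yF i j k)) = Xinv k i * X k j) ∧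
      (∀ g : RingQuot (QRel n) →ₐ[ℚ] NCPoly n,
        (∀ i j k : Fin n, i ≠ j → i ≠ k → j ≠ k →
          g (RingQuot.mkAlgHom ℚ (QRel n) (yF i j k)) = Xinv k i * X k j) → g = f) ∧
      Function.Injective f ∧ f.range = Qn n :=
  ⟨presentationMap, fun _ _ _ => presentationMap_Y,
    fun _ hg => algHom_ext_of_Y fun i j k hij hik hjk =>
      (hg i j k hij hik hjk).trans (presentationMap_Y hij hik hjk).symm,
    presentationMap_injective (by omega), range_presentationMap⟩

end NCPolygon
end
end

section
/- For each n ≥ 3, let G′_n be the group presented by generators s_{ij} for 1 ≤ i < j ≤ n together with s_{i1} for 2 ≤ i ≤ n, subject to the relations s_{i1}s_{j1}⁻¹s_{jk}s_{1k}⁻¹s_{1j}s_{ij}⁻¹s_{ik} = s_{ik}s_{1k}⁻¹s_{1j}s_{ij}⁻¹s_{i1}s_{j1}⁻¹s_{jk} for all 2 ≤ i < j < k ≤ n. Then the assignments s_{ij} ↦ t_{ij} (for 1 ≤ i < j ≤ n) and s_{i1} ↦ t_{i1} (for 2 ≤ i ≤ n) define a group isomorphism from G′_n onto the big triangle group 𝕋_n.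 -/
open scoped Classical

noncomputable section

namespace NCPolygon

/-- Generators of `G′_n`: the pairs `(i,j)` with `i < j`, together with the pairs `(i,1)`
for `i ≠ 1` (vertex `1` of `[n]` is `0 : Fin n`). -/
abbrev SGen (n : ℕ) := {p : Fin n × Fin n // p.1 < p.2 ∨ (p.2.1 = 0 ∧ p.1.1 ≠ 0)}

def sF {n : ℕ} (i j : Fin n) : FreeGroup (SGen n) :=
  if h : i < j ∨ (j.1 = 0 ∧ i.1 ≠ 0) then FreeGroup.of (⟨(i, j), h⟩ : SGen n) else 1

/-- The defining relations of `G′_n`: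
`s_{i1}s_{j1}⁻¹s_{jk}s_{1k}⁻¹s_{1j}s_{ij}⁻¹s_{ik} = s_{ik}s_{1k}⁻¹s_{1j}s_{ij}⁻¹s_{i1}s_{j1}⁻¹s_{jk}`
for `2 ≤ i < j < k ≤ n` (`o` denotes the vertex `1`). -/
def sRels (n : ℕ) : Set (FreeGroup (SGen n)) :=
  { w | ∃ i j k o : Fin n, o.1 = 0 ∧ 0 < i.1 ∧ i < j ∧ j < k ∧
      w = (sF i o * (sF j o)⁻¹ * sF j k * (sF o k)⁻¹ * sF o j * (sF i j)⁻¹ * sF i k) *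
        (sF i k * (sF o k)⁻¹ * sF o j * (sF i j)⁻¹ * sF i o * (sF j o)⁻¹ * sF j k)⁻¹ }

/-!
The triangle relation `t_ij t_kj⁻¹ t_ki = t_ik t_jk⁻¹ t_ji` on a triple is invariant under all
permutations of `(i, j, k)`, and the one on `(i, j, 1)` solves `t_ij` in terms of `t_ji`. So sending
`t_ij` with `i > j ≥ 2` to its solution `s_i1 s_j1⁻¹ s_ji s_1i⁻¹ s_1j` defines an inverse
`𝕋_n → G′_n`: the triangle relations through `1` hold by construction, and for `2 ≤ a < b < c` the one
on `(a, b, c)` becomes, after this substitution, a conjugate of the defining relation of `G′_n`.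
The same substitution shows that the defining relations of `G′_n` hold in `𝕋_n`.
-/

section TriangleRel

variable {ι G H : Type*} [Group G] [Group H]

def TriangleRel (t : ι → ι → G) (i j k : ι) : Prop :=
  t i j * (t k j)⁻¹ * t k i = t i k * (t j k)⁻¹ * t j i

variable {t : ι → ι → G} {i j k : ι}

theorem TriangleRel.swap_right (h : TriangleRel t i j k) : TriangleRel t i k j :=
  Eq.symm h

theorem TriangleRel.swap_left (h : TriangleRel t i j k) : TriangleRel t j i k := by
  have hji : t j i = t j k * (t i k)⁻¹ * (t i j * (t k j)⁻¹ * t k i) := by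
    rw [h]; group
  unfold TriangleRel
  rw [hji]; group

theorem triangleRel_of_lt [LinearOrder ι]
    (h : ∀ a b c : ι, a < b → b < c → TriangleRel t a b c)
    (hij : i ≠ j) (hik : i ≠ k) (hjk : j ≠ k) : TriangleRel t i j k := by
  rcases hij.lt_or_gt with hij | hji <;> rcases hik.lt_or_gt with hik | hki <;>
    rcases hjk.lt_or_gt with hjk | hkj
  · exact h _ _ _ hij hjk
  · exact (h _ _ _ hik hkj).swap_right
  · exact absurd (hki.trans hij) hjk.not_gt
  · exact (h _ _ _ hki hij).swap_left.swap_right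
  · exact (h _ _ _ hji hik).swap_left
  · exact absurd (hji.trans hik) hkj.not_gt
  · exact (h _ _ _ hjk hki).swap_right.swap_left
  · exact (h _ _ _ hkj hji).swap_left.swap_right.swap_left

def viaBase (t : ι → ι → G) (o i j : ι) : G :=
  t i o * (t j o)⁻¹ * t j i * (t o i)⁻¹ * t o j

theorem triangleRel_iff_eq_viaBase {o : ι} : TriangleRel t i j o ↔ t i j = viaBase t o i j := by
  unfold TriangleRel viaBase
  constructor <;> intro h
  · rw [← h]; group
  · rw [h]; group

theorem map_viaBase (f : G →* H) (o : ι) :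
    f (viaBase t o i j) = viaBase (fun i j => f (t i j)) o i j := by
  simp only [viaBase, map_mul, map_inv]

def SevenTermRel (s : ι → ι → G) (o a b c : ι) : Prop :=
  s a o * (s b o)⁻¹ * s b c * (s o c)⁻¹ * s o b * (s a b)⁻¹ * s a c =
    s a c * (s o c)⁻¹ * s o b * (s a b)⁻¹ * s a o * (s b o)⁻¹ * s b c

theorem triangleRel_iff_sevenTermRel {s u : ι → ι → G} {o a b c : ι}
    (hab : u a b = s a b) (hac : u a c = s a c) (hbc : u b c = s b c)
    (hba : u b a = viaBase s o b a) (hca : u c a = viaBase s o c a)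
    (hcb : u c b = viaBase s o c b) :
    TriangleRel u a b c ↔ SevenTermRel s o a b c := by
  -- both sides of the triangle relation are the images of the two sides of the seven-term
  -- relation under the injective map below
  have hf : Function.Injective fun x : G => s a c * x⁻¹ * (s a c * (s o c)⁻¹ * s o a) :=
    (mul_left_injective _).comp ((mul_right_injective _).comp inv_injective)
  rw [SevenTermRel, ← hf.eq_iff, TriangleRel, hab, hac, hbc, hba, hca, hcb]
  unfold viaBase
  constructor <;> intro h <;> convert h using 1 <;> group

end TriangleRel

section BigTriGroup

variable {n : ℕ} {H : Type*} [Group H]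

theorem mk_btF (i j : Fin n) : PresentedGroup.mk (bigRels n) (btF i j) = bigT i j := by
  unfold btF bigT
  split_ifs <;> simp [PresentedGroup.of]

theorem triangleRel_bigT {i j k : Fin n} (hij : i ≠ j) (hik : i ≠ k) (hjk : j ≠ k) :
    TriangleRel bigT i j k := by
  have h := PresentedGroup.mk_eq_mk_of_mul_inv_mem (rels := bigRels n) ⟨i, j, k, hij, hik, hjk, rfl⟩
  simpa only [TriangleRel, map_mul, map_inv, mk_btF] using h

theorem lift_btF (t : Fin n → Fin n → H) {i j : Fin n} (h : i ≠ j) :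
    FreeGroup.lift (fun p : OffD n => t p.1.1 p.1.2) (btF i j) = t i j := by
  rw [btF, dif_pos h, FreeGroup.lift_apply_of]

def liftBigTri (t : Fin n → Fin n → H)
    (ht : ∀ i j k : Fin n, i ≠ j → i ≠ k → j ≠ k → TriangleRel t i j k) : BigTriGroup n →* H :=
  PresentedGroup.toGroup (f := fun p : OffD n => t p.1.1 p.1.2) <| by
    rintro r ⟨i, j, k, hij, hik, hjk, rfl⟩
    simp only [map_mul, map_inv, lift_btF t hij, lift_btF t hik, lift_btF t hjk,
      lift_btF t hij.symm, lift_btF t hik.symm, lift_btF t hjk.symm]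
    exact mul_inv_eq_one.mpr (ht i j k hij hik hjk)

theorem bigT_eq_of {i j : Fin n} (h : i ≠ j) : bigT i j = PresentedGroup.of ⟨(i, j), h⟩ :=
  dif_pos h

theorem liftBigTri_bigT {t : Fin n → Fin n → H}
    {ht : ∀ i j k : Fin n, i ≠ j → i ≠ k → j ≠ k → TriangleRel t i j k} {i j : Fin n}
    (h : i ≠ j) : liftBigTri t ht (bigT i j) = t i j := by
  rw [bigT_eq_of h, liftBigTri, PresentedGroup.toGroup.of]

end BigTriGroup

section SRels

variable {n : ℕ} {H : Type*} [Group H]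

def sG (i j : Fin n) : PresentedGroup (sRels n) := PresentedGroup.mk (sRels n) (sF i j)

theorem sG_eq_of {i j : Fin n} (h : i < j ∨ (j.1 = 0 ∧ i.1 ≠ 0)) :
    sG i j = PresentedGroup.of ⟨(i, j), h⟩ := by
  rw [sG, sF, dif_pos h]; rfl

theorem sevenTermRel_sG [NeZero n] {a b c : Fin n} (ha : 0 < a) (hab : a < b) (hbc : b < c) :
    SevenTermRel sG 0 a b c :=
  PresentedGroup.mk_eq_mk_of_mul_inv_mem ⟨a, b, c, 0, Fin.val_zero n, ha, hab, hbc, rfl⟩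

theorem lift_sF (t : Fin n → Fin n → H) {i j : Fin n} (h : i < j ∨ (j.1 = 0 ∧ i.1 ≠ 0)) :
    FreeGroup.lift (fun p : SGen n => t p.1.1 p.1.2) (sF i j) = t i j := by
  rw [sF, dif_pos h, FreeGroup.lift_apply_of]

def liftSRels [NeZero n] (t : Fin n → Fin n → H)
    (ht : ∀ a b c : Fin n, 0 < a → a < b → b < c → SevenTermRel t 0 a b c) :
    PresentedGroup (sRels n) →* H :=
  PresentedGroup.toGroup (f := fun p : SGen n => t p.1.1 p.1.2) <| by
    rintro r ⟨a, b, c, o, ho, ha, hab, hbc, rfl⟩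
    obtain rfl : o = 0 := Fin.ext ho
    have hb : 0 < b.1 := Nat.lt_trans ha hab
    have hb' : (0 : Fin n) < b := hb
    simp only [map_mul, map_inv, lift_sF t (.inr ⟨ho, ha.ne'⟩), lift_sF t (.inr ⟨ho, hb.ne'⟩),
      lift_sF t (.inl hab), lift_sF t (.inl hbc), lift_sF t (.inl (hab.trans hbc)),
      lift_sF t (.inl hb'), lift_sF t (.inl (hb'.trans hbc))]
    exact mul_inv_eq_one.mpr (ht a b c ha hab hbc)

theorem liftSRels_sG [NeZero n] {t : Fin n → Fin n → H}
    {ht : ∀ a b c : Fin n, 0 < a → a < b → b < c → SevenTermRel t 0 a b c} {i j : Fin n}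
    (h : i < j ∨ (j.1 = 0 ∧ i.1 ≠ 0)) : liftSRels t ht (sG i j) = t i j := by
  rw [sG_eq_of h, liftSRels, PresentedGroup.toGroup.of]

end SRels

section Comparison

variable {n : ℕ} [NeZero n]

theorem sevenTermRel_bigT {a b c : Fin n} (ha : 0 < a) (hab : a < b) (hbc : b < c) :
    SevenTermRel bigT 0 a b c := by
  have hb := ha.trans hab
  have hc := hb.trans hbc
  have viaBase_bigT {i j : Fin n} (hij : i ≠ j) (hi : 0 < i) (hj : 0 < j) :
      bigT i j = viaBase bigT 0 i j :=
    triangleRel_iff_eq_viaBase.mp (triangleRel_bigT hij hi.ne' hj.ne')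
  exact (triangleRel_iff_sevenTermRel rfl rfl rfl (viaBase_bigT hab.ne' hb ha)
    (viaBase_bigT (hab.trans hbc).ne' hc ha) (viaBase_bigT hbc.ne' hc hb)).mp
    (triangleRel_bigT hab.ne (hab.trans hbc).ne hbc.ne)

def sT (i j : Fin n) : PresentedGroup (sRels n) :=
  if j < i ∧ j ≠ 0 then viaBase sG 0 i j else sG i j

theorem sT_of_lt {i j : Fin n} (h : i < j) : sT i j = sG i j :=
  if_neg fun h' => h.asymm h'.1

theorem sT_zero_right (i : Fin n) : sT i 0 = sG i 0 :=
  if_neg fun h => h.2 rfl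

theorem sT_of_gt {i j : Fin n} (h : j < i) (hj : j ≠ 0) : sT i j = viaBase sG 0 i j :=
  if_pos ⟨h, hj⟩

theorem sT_of_gen {i j : Fin n} (h : i < j ∨ (j.1 = 0 ∧ i.1 ≠ 0)) : sT i j = sG i j := by
  rcases h with h | ⟨h, -⟩
  · exact sT_of_lt h
  · rw [show j = 0 from Fin.ext h, sT_zero_right]

theorem triangleRel_sT {i j k : Fin n} (hij : i ≠ j) (hik : i ≠ k) (hjk : j ≠ k) :
    TriangleRel sT i j k := by
  refine triangleRel_of_lt (fun a b c hab hbc => ?_) hij hik hjk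
  rcases (Fin.zero_le a).eq_or_lt with rfl | ha
  · rw [TriangleRel, sT_of_lt hab, sT_of_lt (hab.trans hbc), sT_of_lt hbc, sT_zero_right,
      sT_zero_right, sT_of_gt hbc hab.ne', viaBase]
    group
  · have hb := ha.trans hab
    exact (triangleRel_iff_sevenTermRel (sT_of_lt hab) (sT_of_lt (hab.trans hbc)) (sT_of_lt hbc)
      (sT_of_gt hab ha.ne') (sT_of_gt (hab.trans hbc) ha.ne') (sT_of_gt hbc hb.ne')).mpr
      (sevenTermRel_sG ha hab hbc)

theorem liftSRels_bigT_sT {i j : Fin n} (h : i ≠ j) :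
    liftSRels bigT (fun _ _ _ => sevenTermRel_bigT) (sT i j) = bigT i j := by
  by_cases hgen : i < j ∨ (j.1 = 0 ∧ i.1 ≠ 0)
  · rw [sT_of_gen hgen, liftSRels_sG hgen]
  · have hji : j < i := (not_lt.mp fun h' => hgen (.inl h')).lt_of_ne h.symm
    have hj : 0 < j := by
      simp only [Fin.lt_def, Fin.ext_iff, ne_eq, Fin.val_zero, not_or, not_and] at *
      omega
    have hi := hj.trans hji
    have hi0 : (0 : Fin n).1 = 0 ∧ i.1 ≠ 0 := ⟨Fin.val_zero n, (Fin.val_pos_iff.mpr hi).ne'⟩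
    have hj0 : (0 : Fin n).1 = 0 ∧ j.1 ≠ 0 := ⟨Fin.val_zero n, (Fin.val_pos_iff.mpr hj).ne'⟩
    rw [sT_of_gt hji hj.ne', map_viaBase,
      triangleRel_iff_eq_viaBase.mp (triangleRel_bigT h hi.ne' hj.ne')]
    simp only [viaBase, liftSRels_sG (.inl hji), liftSRels_sG (.inl hi), liftSRels_sG (.inl hj),
      liftSRels_sG (.inr hi0), liftSRels_sG (.inr hj0)]

end Comparison

/-- The assignments `s_{ij} ↦ t_{ij}` define a group isomorphism from
`G′_n` onto the big triangle group `𝕋_n`. -/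
theorem big_triangle_presentation (n : ℕ) (hn : 3 ≤ n) :
    ∃ φ : PresentedGroup (sRels n) →* BigTriGroup n,
      (∀ p : SGen n,
        φ (PresentedGroup.of (rels := sRels n) p) =
          bigT (↑p : Fin n × Fin n).1 (↑p : Fin n × Fin n).2) ∧
      Function.Bijective φ := by
  have : NeZero n := ⟨by omega⟩
  let φ := liftSRels (bigT (n := n)) fun _ _ _ => sevenTermRel_bigT
  let ψ := liftBigTri (sT (n := n)) fun _ _ _ => triangleRel_sT
  have hφ (p : SGen n) : φ (PresentedGroup.of p) = bigT p.1.1 p.1.2 :=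
    PresentedGroup.toGroup.of _
  have hψφ : ψ.comp φ = MonoidHom.id _ := PresentedGroup.ext fun ⟨(i, j), hij⟩ => by
    have hne : i ≠ j := by
      rcases hij with h | ⟨h₁, h₂⟩
      · exact h.ne
      · exact fun h => h₂ (h ▸ h₁)
    simp only [MonoidHom.comp_apply, hφ, ψ, liftBigTri_bigT hne, sT_of_gen hij, sG_eq_of hij,
      MonoidHom.id_apply]
  have hφψ : φ.comp ψ = MonoidHom.id _ := PresentedGroup.ext fun ⟨(i, j), hij⟩ => by
    simp only [MonoidHom.comp_apply, ← bigT_eq_of hij, φ, ψ, liftBigTri_bigT hij,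
      liftSRels_bigT_sT hij, MonoidHom.id_apply]
  exact ⟨φ, hφ, (MonoidHom.toMulEquiv φ ψ hψφ hφψ).bijective⟩

end NCPolygon
end
end
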